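/- If u_{g,t} ∈ {0,1} satisfies the minimum-down-time constraint Σ_{q=t+1}^{t+DT} v_{g,q} ≤ 1 - u_{g,t} for all t ≤ T - DT, with v_{g,q} = max(u_{g,q} - u_{g,q-1}, 0), then whenever the unit shuts down at time s (u_{g,s-1}=1, u_{g,s}=0), it remains off for at least DT consecutive periods: u_{g,t} = 0 for all s ≤ t ≤ s + DT - 1 (within the horizon). -/
import Mathlib


/-- Minimum down-time: if binary `u` satisfies
`Σ_{q=t+1}^{t+DT} v_q ≤ 1 - u_t` for all `t`, where `v_q = max (u_q - u_{q-1}) 0`,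
then a unit shutting down at time `s` (`u_{s-1} = 1`, `u_s = 0`) stays off for
at least `DT` consecutive periods: `u_t = 0` for all `s ≤ t ≤ s + DT - 1`. -/
theorem min_down_time (u : ℕ → ℝ) (DT : ℕ) (hDT : 1 ≤ DT)
    (hbin : ∀ t, u t = 0 ∨ u t = 1)
    (hcon : ∀ t,
      (∑ q ∈ Finset.Icc (t + 1) (t + DT), max (u q - u (q - 1)) 0) ≤ 1 - u t)
    (s : ℕ) (hs : 1 ≤ s) (hon : u (s - 1) = 1) (hoff : u s = 0) :
    ∀ t, s ≤ t → t ≤ s + DT - 1 → u t = 0 := by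
  have hkey := hcon (s - 1)
  rw [hon] at hkey
  have hs1 : s - 1 + 1 = s := Nat.succ_pred_eq_of_pos hs
  rw [hs1] at hkey
  simp only [sub_self] at hkey
  have hzero : ∀ q ∈ Finset.Icc s (s - 1 + DT), max (u q - u (q - 1)) 0 = 0 := by
    intro q hq
    have hnn : ∀ q ∈ Finset.Icc s (s - 1 + DT), 0 ≤ max (u q - u (q - 1)) 0 :=
      fun q _ => le_max_right _ _
    have hsumz : (∑ q ∈ Finset.Icc s (s - 1 + DT), max (u q - u (q - 1)) 0) = 0 :=
      le_antisymm hkey (Finset.sum_nonneg hnn)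
    exact (Finset.sum_eq_zero_iff_of_nonneg hnn).mp hsumz q hq
  intro t ht htub
  induction t, ht using Nat.le_induction with
  | base => exact hoff
  | succ t ht ih =>
    have hub : t + 1 ≤ s - 1 + DT := by omega
    have hv := hzero (t + 1) (Finset.mem_Icc.mpr ⟨by omega, hub⟩)
    have hut : u t = 0 := ih (by omega)
    simp only [Nat.add_sub_cancel, hut, sub_zero] at hv
    have hle : u (t + 1) ≤ 0 := hv ▸ le_max_left _ _
    rcases hbin (t + 1) with h | h
    · exact h
    · linarith
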